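/- arXiv:1511.06667 — 5 statements merged into one kernel-verified Lean document; each statement's English description precedes it below -/
import Mathlib

section
/- For every q ∈ (-1,1), every δ > 0, every k ∈ ℕ, and all x, y with |x| ≤ 2/√(1-q) and |y| ≤ 2/√(1-q), the quantity φ_{q,k}(δ,x,y) := (1 - e^{-2δ} q^{2k})² - (1-q) e^{-δ} q^k (1 + e^{-2δ} q^{2k}) x y + (1-q) e^{-2δ} q^{2k} (x² + y²) satisfies φ_{q,k}(δ,x,y) ≥ (1 - e^{-δ} |q|^k)⁴ ≥ (1 - |q|^k)⁴. -/
/-- φ_{q,k}(δ,x,y) from the q-Ornstein–Uhlenbeck transition density. -/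
noncomputable def phiQ (q : ℝ) (k : ℕ) (δ x y : ℝ) : ℝ :=
  (1 - Real.exp (-2*δ) * q^(2*k))^2
    - (1-q) * Real.exp (-δ) * q^k * (1 + Real.exp (-2*δ) * q^(2*k)) * x * y
    + (1-q) * Real.exp (-2*δ) * q^(2*k) * (x^2 + y^2)

lemma phiQ_aux (t a b C r : ℝ) (ht0 : 0 ≤ t) (ht1 : t ≤ 1)
    (ha0 : 0 ≤ a) (ha : a ≤ 2) (hb0 : 0 ≤ b) (hb : b ≤ 2)
    (hrC : |r * C| ≤ t * (a * b)) (hr2 : r^2 = t^2) :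
    (1-t)^4 ≤ (1 - t^2)^2 - r*(1+t^2)*C + t^2*(a^2+b^2) := by
  have h4 : 0 ≤ 4 - a * b := by nlinarith
  have h1 : -(r * (1+t^2) * C) ≥ -(t * (1+t^2) * (a*b)) := by
    have h2 : |r * C| * (1+t^2) ≤ t * (a*b) * (1+t^2) := by
      apply mul_le_mul_of_nonneg_right hrC; positivity
    have h3 : r * (1+t^2) * C ≤ |r * C| * (1+t^2) := by
      have h := mul_le_mul_of_nonneg_right (le_abs_self (r * C)) (by positivity : (0:ℝ) ≤ 1+t^2)
      nlinarith [h]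
    nlinarith [h2, h3]
  nlinarith [mul_nonneg ht0 (mul_nonneg ht0 (sq_nonneg (a-b))),
    mul_nonneg ht0 (mul_nonneg (sq_nonneg (1-t)) h4)]

theorem stmt0 (q : ℝ) (hq : q ∈ Set.Ioo (-1:ℝ) 1) (δ : ℝ) (hδ : 0 < δ) (k : ℕ)
    (x y : ℝ) (hx : |x| ≤ 2 / Real.sqrt (1-q)) (hy : |y| ≤ 2 / Real.sqrt (1-q)) :
    (1 - Real.exp (-δ) * |q|^k)^4 ≤ phiQ q k δ x y ∧
      (1 - |q|^k)^4 ≤ (1 - Real.exp (-δ) * |q|^k)^4 := by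
  obtain ⟨hq1, hq2⟩ := hq
  have hqs : 0 < 1 - q := by linarith
  set E := Real.exp (-δ) with hE
  have hEpos : 0 < E := Real.exp_pos _
  have hE1 : E ≤ 1 := le_of_lt (Real.exp_lt_one_iff.mpr (by linarith))
  have hE2 : Real.exp (-2*δ) = E^2 := by
    rw [show (-2*δ) = -δ + -δ by ring, Real.exp_add]; ring
  have hqk1 : |q|^k ≤ 1 := pow_le_one₀ (abs_nonneg q) (abs_le.mpr ⟨le_of_lt hq1, le_of_lt hq2⟩)
  have hqk0 : 0 ≤ |q|^k := pow_nonneg (abs_nonneg q) k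
  set s := Real.sqrt (1-q) with hs
  have hspos : 0 < s := Real.sqrt_pos.mpr hqs
  have hs2 : s^2 = 1 - q := Real.sq_sqrt (le_of_lt hqs)
  have ha : s * |x| ≤ 2 := by
    have := (le_div_iff₀ hspos).mp hx; linarith
  have hb : s * |y| ≤ 2 := by
    have := (le_div_iff₀ hspos).mp hy; linarith
  set t := E * |q|^k with ht
  have ht0 : 0 ≤ t := mul_nonneg hEpos.le hqk0
  have ht1 : t ≤ 1 := by
    calc t ≤ 1 * 1 := mul_le_mul hE1 hqk1 hqk0 zero_le_one
    _ = 1 := one_mul 1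
  constructor
  · have key := phiQ_aux t (s * |x|) (s * |y|) ((1-q)*x*y) (E * q^k)
      ht0 ht1 (by positivity) ha (by positivity) hb
      (by
        have heq : |E * q ^ k * ((1 - q) * x * y)| = t * (s * |x| * (s * |y|)) := by
          simp only [abs_mul, abs_pow, abs_of_pos hEpos, abs_of_pos hqs]
          rw [ht, ← hs2]; ring
        exact heq.le)
      (by
        have : (E * q^k)^2 = E^2 * (q^k)^2 := by ring
        rw [this]
        have h2 : (|q|^k)^2 = (q^k)^2 := by
          rw [← abs_pow, sq_abs]
        rw [ht]; rw [mul_pow, h2])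
    have heq : phiQ q k δ x y =
        (1 - t^2)^2 - (E * q^k)*(1+t^2)*((1-q)*x*y)
          + t^2*((s*|x|)^2+(s*|y|)^2) := by
      have ht2 : t^2 = E^2 * q^(2*k) := by
        rw [ht, mul_pow, ← abs_pow, sq_abs, ← pow_mul, Nat.mul_comm]
      rw [phiQ, hE2, ht2]
      have hx2 : (s*|x|)^2 = (1-q) * x^2 := by
        rw [mul_pow, sq_abs, hs2]
      have hy2 : (s*|y|)^2 = (1-q) * y^2 := by
        rw [mul_pow, sq_abs, hs2]
      rw [hx2, hy2]; ring
    rw [heq]; exact key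
  · have h1 : 0 ≤ 1 - |q|^k := by linarith
    have h2 : 1 - |q|^k ≤ 1 - E * |q|^k := by nlinarith
    exact pow_le_pow_left₀ h1 h2 4
end

section
/- For every q ∈ (-1,1), every δ > 0 and all x, y with |x|, |y| ≤ 2/√(1-q), the infinite product ∏_{k=0}^∞ 1/φ_{q,k}(δ,x,y) is bounded above by e^{2δ} / ([16 sinh⁴(δ/2) + (1-q)(x-y)²] · ∏_{k=1}^∞ (1 - |q|^k)⁴). -/
open Real

/-- `∑ₙ Uₙ(u) Uₙ(v) rⁿ = (1 - r²) / poissonDenom r u v` for the Chebyshev polynomials `Uₙ` of the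
second kind. -/
def poissonDenom (r u v : ℝ) : ℝ :=
  (1 - r^2)^2 - 4*r*(1 + r^2)*(u*v) + 4*r^2*(u^2 + v^2)

lemma one_sub_two_mul_add_sq_mem_Icc {r c : ℝ} (hc : |c| ≤ 1) :
    1 - 2*r*c + r^2 ∈ Set.Icc ((1 - |r|)^2) ((1 + |r|)^2) := by
  have hrc : |r*c| ≤ |r| := by rw [abs_mul]; exact mul_le_of_le_one_right (abs_nonneg r) hc
  obtain ⟨h1, h2⟩ := abs_le.1 hrc
  constructor <;> nlinarith [sq_abs r]

lemma poissonDenom_eq_mul (r u v a b : ℝ) (ha : a^2 = 1 - u^2) (hb : b^2 = 1 - v^2) :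
    poissonDenom r u v = (1 - 2*r*(u*v + a*b) + r^2) * (1 - 2*r*(u*v - a*b) + r^2) := by
  unfold poissonDenom
  linear_combination (4*r^2*b^2) * ha + (4*r^2*(1-u^2)) * hb

lemma abs_mul_add_mul_le_one {u v a b : ℝ} (ha : u^2 + a^2 = 1) (hb : v^2 + b^2 = 1) :
    |u*v + a*b| ≤ 1 := by
  rw [← sq_le_one_iff_abs_le_one]
  nlinarith [sq_nonneg (u*b - a*v)]

lemma poissonDenom_mem_Icc {r u v : ℝ} (hu : |u| ≤ 1) (hv : |v| ≤ 1) :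
    poissonDenom r u v ∈ Set.Icc ((1 - |r|)^4) ((1 + |r|)^4) := by
  set a := √(1 - u^2)
  set b := √(1 - v^2)
  have ha : a^2 = 1 - u^2 := sq_sqrt (by nlinarith [sq_le_one_iff_abs_le_one u |>.2 hu])
  have hb : b^2 = 1 - v^2 := sq_sqrt (by nlinarith [sq_le_one_iff_abs_le_one v |>.2 hv])
  obtain ⟨h₁, h₂⟩ := one_sub_two_mul_add_sq_mem_Icc (r := r)
    (abs_mul_add_mul_le_one (u := u) (v := v) (a := a) (b := b) (by linarith) (by linarith))
  obtain ⟨h₃, h₄⟩ := one_sub_two_mul_add_sq_mem_Icc (r := r)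
    (abs_mul_add_mul_le_one (u := u) (v := v) (a := a) (b := -b) (by linarith) (by linarith))
  rw [mul_neg, ← sub_eq_add_neg] at h₃ h₄
  have h₀ : 0 ≤ (1 - |r|)^2 := sq_nonneg _
  rw [poissonDenom_eq_mul r u v a b ha hb]
  constructor
  · calc (1 - |r|)^4 = (1 - |r|)^2 * (1 - |r|)^2 := by ring
      _ ≤ _ := mul_le_mul h₁ h₃ h₀ (h₀.trans h₁)
  · calc _ ≤ (1 + |r|)^2 * (1 + |r|)^2 := mul_le_mul h₂ h₄ (h₀.trans h₃) (sq_nonneg _)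
      _ = (1 + |r|)^4 := by ring

lemma abs_poissonDenom_sub_one_le {r u v : ℝ} (hr : |r| ≤ 1) (hu : |u| ≤ 1) (hv : |v| ≤ 1) :
    |poissonDenom r u v - 1| ≤ 15 * |r| := by
  obtain ⟨h₁, h₂⟩ := poissonDenom_mem_Icc (r := r) hu hv
  have h₀ := abs_nonneg r
  rw [abs_le]
  constructor <;> nlinarith [mul_nonneg h₀ (sub_nonneg.2 hr), pow_le_one₀ h₀ hr (n := 2),
    pow_le_one₀ h₀ hr (n := 3)]

lemma pow_four_one_sub_add_le_poissonDenom {r u v : ℝ} (hr : 0 ≤ r) (huv : u*v ≤ 1) :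
    (1 - r)^4 + 4*r^2*(u - v)^2 ≤ poissonDenom r u v := by
  unfold poissonDenom
  nlinarith [mul_nonneg (mul_nonneg hr (sq_nonneg (1 - r))) (sub_nonneg.2 huv)]

lemma exp_neg_two_mul_mul_sinh_half_pow_four (δ : ℝ) :
    exp (-2*δ) * (16 * sinh (δ/2)^4) = (1 - exp (-δ))^4 := by
  have h1 : exp δ = exp (δ/2)^2 := by rw [← exp_nat_mul]; ring_nf
  have h2 : exp (2*δ) = exp (δ/2)^4 := by rw [← exp_nat_mul]; ring_nf
  rw [sinh_eq, neg_mul, exp_neg, exp_neg, exp_neg, h1, h2]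
  field_simp
  ring

lemma phiQ_eq_poissonDenom {q : ℝ} (hq : q ≤ 1) (k : ℕ) (δ x y : ℝ) :
    phiQ q k δ x y =
      poissonDenom (exp (-δ) * q^k) (√(1 - q) * x / 2) (√(1 - q) * y / 2) := by
  have hs : √(1 - q)^2 = 1 - q := sq_sqrt (by linarith)
  have he : exp (-2*δ) = exp (-δ)^2 := by rw [← exp_nat_mul]; ring_nf
  unfold phiQ poissonDenom
  rw [he, pow_mul']
  linear_combination (-(exp (-δ))^2 * (q^k)^2 * (x^2 + y^2)
    + exp (-δ) * q^k * (1 + exp (-δ)^2 * (q^k)^2) * x * y) * hs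

lemma abs_sqrt_one_sub_mul_div_two_le_one {q x : ℝ} (hq : q < 1) (hx : |x| ≤ 2 / √(1 - q)) :
    |√(1 - q) * x / 2| ≤ 1 := by
  have hs : 0 < √(1 - q) := sqrt_pos.2 (by linarith)
  rw [abs_div, abs_mul, abs_of_pos hs, abs_two]
  rw [le_div_iff₀ hs] at hx
  linarith

lemma abs_exp_neg_mul_pow_le {δ : ℝ} (hδ : 0 ≤ δ) (q : ℝ) (k : ℕ) :
    |exp (-δ) * q^k| ≤ |q|^k := by
  rw [abs_mul, abs_of_pos (exp_pos _), abs_pow]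
  exact mul_le_of_le_one_left (by positivity) (exp_le_one_iff.2 (by linarith))

section phiQ

variable {q δ x y : ℝ}

lemma sixteen_mul_sinh_half_pow_four_add_pos (hq : q ≤ 1) (hδ : 0 < δ) :
    0 < 16 * sinh (δ/2)^4 + (1 - q)*(x - y)^2 := by
  have : 0 < sinh (δ/2) := sinh_pos_iff.2 (by linarith)
  have : 0 ≤ 1 - q := by linarith
  positivity

lemma pow_four_one_sub_abs_pow_le_phiQ (hq : |q| < 1) (hδ : 0 ≤ δ)
    (hx : |x| ≤ 2 / √(1 - q)) (hy : |y| ≤ 2 / √(1 - q)) (k : ℕ) :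
    (1 - |q|^k)^4 ≤ phiQ q k δ x y := by
  have hq1 := (abs_lt.1 hq).2
  rw [phiQ_eq_poissonDenom hq1.le]
  refine le_trans ?_ (poissonDenom_mem_Icc (abs_sqrt_one_sub_mul_div_two_le_one hq1 hx)
    (abs_sqrt_one_sub_mul_div_two_le_one hq1 hy)).1
  have hqk : |q|^k ≤ 1 := pow_le_one₀ (abs_nonneg q) hq.le
  exact pow_le_pow_left₀ (by linarith) (by linarith [abs_exp_neg_mul_pow_le hδ q k]) 4

lemma abs_phiQ_sub_one_le (hq : |q| < 1) (hδ : 0 ≤ δ)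
    (hx : |x| ≤ 2 / √(1 - q)) (hy : |y| ≤ 2 / √(1 - q)) (k : ℕ) :
    |phiQ q k δ x y - 1| ≤ 15 * |q|^k := by
  have hq1 := (abs_lt.1 hq).2
  have hr := abs_exp_neg_mul_pow_le hδ q k
  rw [phiQ_eq_poissonDenom hq1.le]
  refine (abs_poissonDenom_sub_one_le (hr.trans (pow_le_one₀ (abs_nonneg q) hq.le))
    (abs_sqrt_one_sub_mul_div_two_le_one hq1 hx)
    (abs_sqrt_one_sub_mul_div_two_le_one hq1 hy)).trans ?_
  gcongr

lemma exp_neg_two_mul_mul_le_phiQ_zero (hq : q < 1)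
    (hx : |x| ≤ 2 / √(1 - q)) (hy : |y| ≤ 2 / √(1 - q)) :
    exp (-2*δ) * (16 * sinh (δ/2)^4 + (1 - q)*(x - y)^2) ≤ phiQ q 0 δ x y := by
  have hu := abs_sqrt_one_sub_mul_div_two_le_one hq hx
  have hv := abs_sqrt_one_sub_mul_div_two_le_one hq hy
  have huv : (√(1 - q) * x / 2) * (√(1 - q) * y / 2) ≤ 1 :=
    (le_abs_self _).trans (by rw [abs_mul]; exact mul_le_one₀ hu (abs_nonneg _) hv)
  have hs : √(1 - q)^2 = 1 - q := sq_sqrt (by linarith)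
  have he : exp (-2*δ) = exp (-δ)^2 := by rw [← exp_nat_mul]; ring_nf
  rw [phiQ_eq_poissonDenom hq.le, pow_zero, mul_one]
  refine le_trans (le_of_eq ?_) (pow_four_one_sub_add_le_poissonDenom (exp_pos _).le huv)
  rw [mul_add, exp_neg_two_mul_mul_sinh_half_pow_four, he]
  linear_combination (-exp (-δ)^2 * (x - y)^2) * hs

lemma phiQ_pos (hq : |q| < 1) (hδ : 0 < δ)
    (hx : |x| ≤ 2 / √(1 - q)) (hy : |y| ≤ 2 / √(1 - q)) (k : ℕ) :
    0 < phiQ q k δ x y := by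
  cases k with
  | zero =>
    have hA := sixteen_mul_sinh_half_pow_four_add_pos (x := x) (y := y) (abs_lt.1 hq).2.le hδ
    exact lt_of_lt_of_le (by positivity) (exp_neg_two_mul_mul_le_phiQ_zero (abs_lt.1 hq).2 hx hy)
  | succ k =>
    refine lt_of_lt_of_le ?_ (pow_four_one_sub_abs_pow_le_phiQ hq hδ.le hx hy _)
    have : |q|^(k+1) < 1 := pow_lt_one₀ (abs_nonneg q) hq k.succ_ne_zero
    have : 0 < 1 - |q|^(k+1) := by linarith
    positivity

end phiQ

lemma tprod_one_div_le_one_div_mul_tprod {a b : ℕ → ℝ} {c : ℝ} (ha : ∀ k, 0 < a k)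
    (hb : ∀ k, 0 < b k) (hla : Summable fun k => log (a k)) (hlb : Summable fun k => log (b k))
    (hc : 0 < c) (h₀ : c ≤ a 0) (hsucc : ∀ k, b k ≤ a (k + 1)) :
    ∏' k, 1 / a k ≤ 1 / (c * ∏' k, b k) := by
  have hlog : log c + ∑' k, log (b k) ≤ ∑' k, log (a k) := by
    rw [hla.tsum_eq_zero_add]
    exact add_le_add (log_le_log hc h₀) (hlb.tsum_le_tsum
      (fun k => log_le_log (hb k) (hsucc k)) ((summable_nat_add_iff 1).2 hla))
  have hla' : Summable fun k => log (1 / a k) := by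
    simpa only [one_div, log_inv] using hla.neg
  rw [← rexp_tsum_eq_tprod (fun k => one_div_pos.2 (ha k)) hla', ← rexp_tsum_eq_tprod hb hlb]
  simp only [one_div, log_inv, tsum_neg]
  rw [← exp_log hc, ← exp_add, ← exp_neg]
  exact exp_le_exp.2 (by linarith)

lemma summable_log_of_abs_sub_one_le {f : ℕ → ℝ} {C t : ℝ} (ht₀ : 0 ≤ t) (ht₁ : t < 1)
    (h : ∀ k, |f k - 1| ≤ C * t^k) : Summable fun k => log (f k) := by
  have hs : Summable fun k => f k - 1 :=
    ((summable_geometric_of_lt_one ht₀ ht₁).mul_left C).of_norm_bounded h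
  simpa using Real.summable_log_one_add_of_summable hs

lemma summable_log_pow_one_sub_pow_succ {t : ℝ} (ht₀ : 0 ≤ t) (ht₁ : t < 1) (n : ℕ) :
    Summable fun k => log ((1 - t^(k + 1))^n) := by
  have hs : Summable fun k => -t^(k + 1) :=
    ((summable_nat_add_iff 1).2 (summable_geometric_of_lt_one ht₀ ht₁)).neg
  simpa only [log_pow, sub_eq_add_neg] using
    (Real.summable_log_one_add_of_summable hs).mul_left (n : ℝ)

theorem stmt2 (q : ℝ) (hq : q ∈ Set.Ioo (-1:ℝ) 1) (δ : ℝ) (hδ : 0 < δ)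
    (x y : ℝ) (hx : |x| ≤ 2 / Real.sqrt (1-q)) (hy : |y| ≤ 2 / Real.sqrt (1-q)) :
    (∏' k : ℕ, 1 / phiQ q k δ x y)
      ≤ Real.exp (2*δ) /
        ((16 * Real.sinh (δ/2) ^ 4 + (1-q)*(x-y)^2) * ∏' k : ℕ, (1 - |q|^(k+1))^4) := by
  have hq' : |q| < 1 := abs_lt.2 hq
  have hA := sixteen_mul_sinh_half_pow_four_add_pos (x := x) (y := y) hq.2.le hδ
  refine (tprod_one_div_le_one_div_mul_tprod (phiQ_pos hq' hδ hx hy)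
    (fun k => pow_pos (sub_pos.2 (pow_lt_one₀ (abs_nonneg q) hq' k.succ_ne_zero)) 4)
    (summable_log_of_abs_sub_one_le (abs_nonneg q) hq' (abs_phiQ_sub_one_le hq' hδ.le hx hy))
    (summable_log_pow_one_sub_pow_succ (abs_nonneg q) hq' 4)
    (mul_pos (exp_pos _) hA) (exp_neg_two_mul_mul_le_phiQ_zero hq.2 hx hy)
    (fun k => pow_four_one_sub_abs_pow_le_phiQ hq' hδ.le hx hy (k + 1))).trans_eq ?_
  rw [neg_mul, exp_neg, mul_assoc, one_div, mul_inv, inv_inv, ← div_eq_mul_inv]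
end

section
/- For every z in the complex upper half-plane, the Cauchy–Stieltjes transform of the free 1/2-stable law at time 1 satisfies ∫_{1/4}^∞ (√(4x-1)/(2πx²)) · 1/(z-x) dx = (√(1-4z) - 1 + 2z)/(2z²), where √ denotes the standard branch of the square root. -/
/-!
Substituting `x = (1 + t²) / 4` turns the integral into
`-(16 / π) ∫₀^∞ t² / ((1 + t²)² (t² + s²)) dt`, where `s = √(1 - 4z)` has positive real part and
`z - x = -(t² + s²) / 4`. By partial fractions this is a combination of `∫₀^∞ (1 + t²)⁻¹ = π / 2`,
`∫₀^∞ (1 + t²)⁻² = π / 4` and `∫₀^∞ (t² + s²)⁻¹ = π / (2s)`; the last one is computed from the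
primitive `(2 I s)⁻¹ (log (s + I t) - log (s - I t))`, which is smooth on all of `ℝ` because
`s ± I t` stays in the right half-plane, away from the branch cut of `log`. Altogether the
integral equals `-4 / (1 + s)²`, which is the stated closed form once `z = (1 - s²) / 4`.
-/

open MeasureTheory Filter Set Topology Real
open Complex (I)

lemma tendsto_div_one_add_sq_atTop : Tendsto (fun t : ℝ => t / (1 + t ^ 2)) atTop (𝓝 0) := by
  refine tendsto_of_tendsto_of_tendsto_of_le_of_le' tendsto_const_nhds tendsto_inv_atTop_zero
    ?_ ?_ <;> filter_upwards [eventually_gt_atTop 0] with t ht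
  · positivity
  · rw [div_le_iff₀ (by positivity)]
    field_simp
    nlinarith

lemma integrable_inv_one_add_sq_sq : Integrable fun t : ℝ => ((1 + t ^ 2) ^ 2)⁻¹ := by
  refine integrable_inv_one_add_sq.mono' (by fun_prop) (Eventually.of_forall fun t => ?_)
  rw [Real.norm_of_nonneg (by positivity)]
  gcongr
  nlinarith [sq_nonneg t]

lemma integral_Ioi_zero_inv_one_add_sq_sq : ∫ t in Ioi (0 : ℝ), ((1 + t ^ 2) ^ 2)⁻¹ = π / 4 := by
  have hderiv (t : ℝ) :
      HasDerivAt (fun t => (arctan t + t / (1 + t ^ 2)) / 2) ((1 + t ^ 2) ^ 2)⁻¹ t := by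
    have h1t : 1 + t ^ 2 ≠ 0 := by positivity
    have hq : HasDerivAt (fun t : ℝ => 1 + t ^ 2) (2 * t) t := by
      simpa using (hasDerivAt_pow 2 t).const_add 1
    refine (((hasDerivAt_arctan' t).add ((hasDerivAt_id' t).div hq h1t)).div_const 2).congr_deriv ?_
    field_simp
    ring
  have hlim : Tendsto (fun t => (arctan t + t / (1 + t ^ 2)) / 2) atTop (𝓝 ((π / 2 + 0) / 2)) :=
    ((tendsto_nhds_of_tendsto_nhdsWithin tendsto_arctan_atTop).add
      tendsto_div_one_add_sq_atTop).div_const 2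
  rw [integral_Ioi_of_hasDerivAt_of_tendsto' (fun t _ => hderiv t)
    integrable_inv_one_add_sq_sq.integrableOn hlim]
  simp only [arctan_zero, zero_add, zero_pow two_ne_zero, zero_div, add_zero, sub_zero]
  ring

lemma one_add_ofReal_sq_eq (t : ℝ) : 1 + (t : ℂ) ^ 2 = ((1 + t ^ 2 : ℝ) : ℂ) := by
  push_cast; rfl

lemma one_add_ofReal_sq_ne_zero (t : ℝ) : 1 + (t : ℂ) ^ 2 ≠ 0 := by
  rw [one_add_ofReal_sq_eq]
  exact_mod_cast (by positivity : 1 + t ^ 2 ≠ 0)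

lemma integral_Ioi_zero_inv_one_add_ofReal_sq :
    ∫ t in Ioi (0 : ℝ), (1 + (t : ℂ) ^ 2)⁻¹ = (π : ℂ) / 2 := by
  simp_rw [one_add_ofReal_sq_eq, ← Complex.ofReal_inv]
  rw [integral_complex_ofReal, integral_Ioi_inv_one_add_sq]
  simp

lemma integral_Ioi_zero_inv_one_add_ofReal_sq_sq :
    ∫ t in Ioi (0 : ℝ), ((1 + (t : ℂ) ^ 2) ^ 2)⁻¹ = (π : ℂ) / 4 := by
  simp_rw [one_add_ofReal_sq_eq, ← Complex.ofReal_pow, ← Complex.ofReal_inv]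
  rw [integral_complex_ofReal, integral_Ioi_zero_inv_one_add_sq_sq]
  push_cast
  rfl

lemma div_one_add_sq_mul_add_eq {K : Type*} [Field K] {u w : K} (hu : 1 + u ≠ 0)
    (huw : u + w ≠ 0) (hw : 1 - w ≠ 0) :
    u / ((1 + u) ^ 2 * (u + w)) = w / (1 - w) ^ 2 * (1 + u)⁻¹ + (1 - w)⁻¹ * ((1 + u) ^ 2)⁻¹
      - w / (1 - w) ^ 2 * (u + w)⁻¹ := by
  field_simp
  ring

section RightHalfPlane

variable {s : ℂ}

lemma add_I_mul_ofReal_mem_slitPlane (hs : 0 < s.re) (t : ℝ) : s + I * t ∈ Complex.slitPlane :=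
  Or.inl (by simpa using hs)

lemma sub_I_mul_ofReal_mem_slitPlane (hs : 0 < s.re) (t : ℝ) : s - I * t ∈ Complex.slitPlane :=
  Or.inl (by simpa using hs)

lemma ofReal_sq_add_sq_eq_mul (s : ℂ) (t : ℝ) :
    (t : ℂ) ^ 2 + s ^ 2 = (s + I * t) * (s - I * t) := by
  linear_combination (t : ℂ) ^ 2 * Complex.I_sq

lemma sq_re_le_norm_ofReal_sq_add_sq (s : ℂ) (t : ℝ) : s.re ^ 2 ≤ ‖(t : ℂ) ^ 2 + s ^ 2‖ := by
  have hadd : |s.re| ≤ ‖s + I * t‖ := by simpa using Complex.abs_re_le_norm (s + I * t)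
  have hsub : |s.re| ≤ ‖s - I * t‖ := by simpa using Complex.abs_re_le_norm (s - I * t)
  rw [ofReal_sq_add_sq_eq_mul, norm_mul, ← sq_abs, sq]
  exact mul_le_mul hadd hsub (abs_nonneg _) (norm_nonneg _)

lemma ofReal_sq_add_sq_ne_zero (hs : 0 < s.re) (t : ℝ) : (t : ℂ) ^ 2 + s ^ 2 ≠ 0 :=
  norm_pos_iff.1 ((pow_pos hs 2).trans_le (sq_re_le_norm_ofReal_sq_add_sq s t))

lemma hasDerivAt_log_add_I_mul_sub_log_sub_I_mul (hs : 0 < s.re) (t : ℝ) :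
    HasDerivAt (fun t : ℝ => Complex.log (s + I * t) - Complex.log (s - I * t))
      (2 * I * s * ((t : ℂ) ^ 2 + s ^ 2)⁻¹) t := by
  have hI : HasDerivAt (fun t : ℝ => I * t) I t := by
    simpa using (hasDerivAt_id t).ofReal_comp.const_mul I
  have hadd := (hI.const_add s).clog_real (add_I_mul_ofReal_mem_slitPlane hs t)
  have hsub := (hI.const_sub s).clog_real (sub_I_mul_ofReal_mem_slitPlane hs t)
  refine (hadd.sub hsub).congr_deriv ?_
  have hadd₀ := Complex.slitPlane_ne_zero (add_I_mul_ofReal_mem_slitPlane hs t)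
  have hsub₀ := Complex.slitPlane_ne_zero (sub_I_mul_ofReal_mem_slitPlane hs t)
  rw [ofReal_sq_add_sq_eq_mul]
  field_simp
  ring

lemma tendsto_log_add_I_mul_sub_log_sub_I_mul (hs : 0 < s.re) :
    Tendsto (fun t : ℝ => Complex.log (s + I * t) - Complex.log (s - I * t)) atTop
      (𝓝 (π * I)) := by
  -- `log (s ± I t) = log t + log (s / t ± I)` for `t > 0`, and `s / t ± I → ± I`
  have hlim : Tendsto (fun t : ℝ => Complex.log (s * (t⁻¹ : ℝ) + I)
      - Complex.log (s * (t⁻¹ : ℝ) - I)) atTop (𝓝 (Complex.log I - Complex.log (-I))) := by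
    have hinv : Tendsto (fun t : ℝ => s * ((t⁻¹ : ℝ) : ℂ)) atTop (𝓝 0) := by
      simpa using (Complex.continuous_ofReal.tendsto 0).comp tendsto_inv_atTop_zero |>.const_mul s
    simpa using ((continuousAt_clog (Or.inr (by simp))).tendsto.comp (hinv.add_const I)).sub
      ((continuousAt_clog (Or.inr (by simp))).tendsto.comp (hinv.sub_const I))
  rw [Complex.log_I, Complex.log_neg_I,
    show (π / 2 * I - -(π / 2) * I : ℂ) = π * I by ring] at hlim
  refine hlim.congr' ?_
  filter_upwards [eventually_gt_atTop 0] with t ht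
  have hre : 0 < (s * ((t⁻¹ : ℝ) : ℂ)).re := by simpa using mul_pos hs (inv_pos.2 ht)
  have ht₀ : (t : ℂ) ≠ 0 := by exact_mod_cast ht.ne'
  have hadd₀ : s * ((t⁻¹ : ℝ) : ℂ) + I ≠ 0 :=
    Complex.slitPlane_ne_zero (Or.inl (by simpa using hre))
  have hsub₀ : s * ((t⁻¹ : ℝ) : ℂ) - I ≠ 0 :=
    Complex.slitPlane_ne_zero (Or.inl (by simpa using hre))
  have hadd : s + I * t = t * (s * ((t⁻¹ : ℝ) : ℂ) + I) := by push_cast; field_simp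
  have hsub : s - I * t = t * (s * ((t⁻¹ : ℝ) : ℂ) - I) := by push_cast; field_simp
  rw [hadd, hsub, Complex.log_ofReal_mul ht hadd₀, Complex.log_ofReal_mul ht hsub₀]
  ring

lemma integrable_inv_ofReal_sq_add_sq (hs : 0 < s.re) :
    Integrable fun t : ℝ => ((t : ℂ) ^ 2 + s ^ 2)⁻¹ := by
  have hcont : Continuous fun t : ℝ => ((t : ℂ) ^ 2 + s ^ 2)⁻¹ :=
    (by fun_prop : Continuous fun t : ℝ => (t : ℂ) ^ 2 + s ^ 2).inv₀ (ofReal_sq_add_sq_ne_zero hs)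
  refine (integrable_inv_one_add_sq.const_mul (1 + ‖1 - s ^ 2‖ / s.re ^ 2)).mono'
    hcont.aestronglyMeasurable (Eventually.of_forall fun t => ?_)
  have hsplit : ((t : ℂ) ^ 2 + s ^ 2)⁻¹
      = (1 + (t : ℂ) ^ 2)⁻¹ + (1 - s ^ 2) * ((t : ℂ) ^ 2 + s ^ 2)⁻¹ * (1 + (t : ℂ) ^ 2)⁻¹ := by
    field_simp [ofReal_sq_add_sq_ne_zero hs t, one_add_ofReal_sq_ne_zero t]
    ring
  have hnorm : ‖(1 + (t : ℂ) ^ 2)⁻¹‖ = (1 + t ^ 2)⁻¹ := by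
    rw [one_add_ofReal_sq_eq, norm_inv, Complex.norm_of_nonneg (by positivity)]
  have hbound : ‖((t : ℂ) ^ 2 + s ^ 2)⁻¹‖ ≤ (s.re ^ 2)⁻¹ := by
    rw [norm_inv]
    exact inv_anti₀ (pow_pos hs 2) (sq_re_le_norm_ofReal_sq_add_sq s t)
  calc ‖((t : ℂ) ^ 2 + s ^ 2)⁻¹‖
      ≤ ‖(1 + (t : ℂ) ^ 2)⁻¹‖
          + ‖1 - s ^ 2‖ * ‖((t : ℂ) ^ 2 + s ^ 2)⁻¹‖ * ‖(1 + (t : ℂ) ^ 2)⁻¹‖ := by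
        rw [← norm_mul, ← norm_mul]
        exact (congrArg norm hsplit).trans_le (norm_add_le _ _)
    _ = (1 + ‖1 - s ^ 2‖ * ‖((t : ℂ) ^ 2 + s ^ 2)⁻¹‖) * (1 + t ^ 2)⁻¹ := by rw [hnorm]; ring
    _ ≤ (1 + ‖1 - s ^ 2‖ / s.re ^ 2) * (1 + t ^ 2)⁻¹ := by
        rw [div_eq_mul_inv]
        gcongr

lemma integral_Ioi_zero_inv_ofReal_sq_add_sq (hs : 0 < s.re) :
    ∫ t in Ioi (0 : ℝ), ((t : ℂ) ^ 2 + s ^ 2)⁻¹ = π / (2 * s) := by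
  have hs₀ : s ≠ 0 := fun h => by simp [h] at hs
  have h2Is : 2 * I * s ≠ 0 := by simp [hs₀]
  have hderiv (t : ℝ) : HasDerivAt
      (fun t : ℝ => (2 * I * s)⁻¹ * (Complex.log (s + I * t) - Complex.log (s - I * t)))
      ((t : ℂ) ^ 2 + s ^ 2)⁻¹ t := by
    simpa only [inv_mul_cancel_left₀ h2Is] using
      (hasDerivAt_log_add_I_mul_sub_log_sub_I_mul hs t).const_mul (2 * I * s)⁻¹
  rw [integral_Ioi_of_hasDerivAt_of_tendsto' (fun t _ => hderiv t)
    (integrable_inv_ofReal_sq_add_sq hs).integrableOn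
    ((tendsto_log_add_I_mul_sub_log_sub_I_mul hs).const_mul _)]
  field_simp
  simp

lemma integral_Ioi_zero_sq_div_one_add_sq_sq_mul (hs : 0 < s.re) (hs₁ : s ≠ 1) :
    ∫ t in Ioi (0 : ℝ), (t : ℂ) ^ 2 / ((1 + (t : ℂ) ^ 2) ^ 2 * ((t : ℂ) ^ 2 + s ^ 2))
      = π / (4 * (1 + s) ^ 2) := by
  have h1s : 1 + s ≠ 0 := fun h => by
    rw [show s = -1 by linear_combination h] at hs
    norm_num at hs
  have hw : 1 - s ^ 2 ≠ 0 := by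
    rw [show 1 - s ^ 2 = (1 - s) * (1 + s) by ring]
    exact mul_ne_zero (sub_ne_zero.2 (Ne.symm hs₁)) h1s
  have hint₁ : Integrable fun t : ℝ => (1 + (t : ℂ) ^ 2)⁻¹ := by
    simpa using integrable_inv_one_add_sq.ofReal (𝕜 := ℂ)
  have hint₂ : Integrable fun t : ℝ => ((1 + (t : ℂ) ^ 2) ^ 2)⁻¹ := by
    simpa using integrable_inv_one_add_sq_sq.ofReal (𝕜 := ℂ)
  have hint₃ := integrable_inv_ofReal_sq_add_sq hs
  simp_rw [div_one_add_sq_mul_add_eq (one_add_ofReal_sq_ne_zero _)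
    (ofReal_sq_add_sq_ne_zero hs _) hw]
  rw [integral_sub ((hint₁.integrableOn.const_mul _).fun_add (hint₂.integrableOn.const_mul _))
      (hint₃.integrableOn.const_mul _),
    integral_add (hint₁.integrableOn.const_mul _) (hint₂.integrableOn.const_mul _),
    integral_const_mul, integral_const_mul, integral_const_mul,
    integral_Ioi_zero_inv_one_add_ofReal_sq, integral_Ioi_zero_inv_one_add_ofReal_sq_sq,
    integral_Ioi_zero_inv_ofReal_sq_add_sq hs]
  field_simp
  ring

lemma image_one_add_sq_div_four_Ioi_zero :
    (fun t : ℝ => (1 + t ^ 2) / 4) '' Ioi 0 = Ioi (1 / 4) := by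
  ext x
  refine ⟨?_, fun hx => ⟨√(4 * x - 1), ?_, ?_⟩⟩
  · rintro ⟨t, ht, rfl⟩
    simp only [mem_Ioi] at ht ⊢
    nlinarith
  · simp only [mem_Ioi] at hx ⊢
    exact Real.sqrt_pos.2 (by linarith)
  · simp only [mem_Ioi] at hx
    change (1 + √(4 * x - 1) ^ 2) / 4 = x
    rw [Real.sq_sqrt (by linarith)]
    ring

lemma integral_Ioi_quarter_sqrt_div_mul_inv_sub {z : ℂ} (hs : 0 < s.re) (hs₁ : s ≠ 1)
    (hsz : s ^ 2 = 1 - 4 * z) :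
    ∫ x in Ioi (1 / 4 : ℝ), ((√(4 * x - 1) / (2 * π * x ^ 2) : ℝ) : ℂ) * (z - x)⁻¹
      = -4 / (1 + s) ^ 2 := by
  have hderiv : ∀ t ∈ Ioi (0 : ℝ),
      HasDerivWithinAt (fun t : ℝ => (1 + t ^ 2) / 4) (t / 2) (Ioi 0) t := fun t _ => by
    refine (((hasDerivAt_pow 2 t).const_add 1).div_const 4).hasDerivWithinAt.congr_deriv ?_
    ring
  have hinj : InjOn (fun t : ℝ => (1 + t ^ 2) / 4) (Ioi 0) := fun a ha b hb hab => by
    simp only [mem_Ioi] at ha hb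
    nlinarith
  have hπ : (π : ℂ) ≠ 0 := by exact_mod_cast pi_ne_zero
  have hsubst : ∀ t ∈ Ioi (0 : ℝ), |t / 2| • (((√(4 * ((1 + t ^ 2) / 4) - 1)
      / (2 * π * ((1 + t ^ 2) / 4) ^ 2) : ℝ) : ℂ) * (z - ((1 + t ^ 2) / 4 : ℝ))⁻¹)
      = -16 / π * ((t : ℂ) ^ 2 / ((1 + (t : ℂ) ^ 2) ^ 2 * ((t : ℂ) ^ 2 + s ^ 2))) := by
    intro t ht
    rw [mem_Ioi] at ht
    have hsqrt : √(4 * ((1 + t ^ 2) / 4) - 1) = t := by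
      rw [show 4 * ((1 + t ^ 2) / 4) - 1 = t ^ 2 by ring, Real.sqrt_sq ht.le]
    have hzx : z - ((1 + t ^ 2) / 4 : ℝ) = -((t : ℂ) ^ 2 + s ^ 2) / 4 := by
      push_cast
      linear_combination hsz / 4
    have ht2s := ofReal_sq_add_sq_ne_zero hs t
    have h1t := one_add_ofReal_sq_ne_zero t
    rw [hsqrt, abs_of_pos (half_pos ht), hzx, Complex.real_smul]
    push_cast
    field_simp
    ring
  rw [← image_one_add_sq_div_four_Ioi_zero,
    integral_image_eq_integral_abs_deriv_smul measurableSet_Ioi hderiv hinj,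
    setIntegral_congr_fun measurableSet_Ioi hsubst, integral_const_mul,
    integral_Ioi_zero_sq_div_one_add_sq_sq_mul hs hs₁]
  field_simp
  ring

end RightHalfPlane

lemma re_cpow_one_half_pos {w : ℂ} (hw : w.im ≠ 0) : 0 < (w ^ ((1 : ℂ) / 2)).re := by
  rw [one_div, Complex.cpow_inv_two_re]
  refine Real.sqrt_pos.2 (half_pos ?_)
  linarith [neg_abs_le w.re, Complex.abs_re_lt_norm.2 hw]

lemma cpow_one_half_sq (w : ℂ) : (w ^ ((1 : ℂ) / 2)) ^ 2 = w := by
  rw [one_div]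
  exact_mod_cast Complex.cpow_nat_inv_pow w two_ne_zero

theorem stmt10 (z : ℂ) (hz : 0 < z.im) :
    (∫ x in Set.Ioi (1/4 : ℝ),
        ((Real.sqrt (4*x - 1) / (2*Real.pi*x^2) : ℝ) : ℂ) * (z - (x:ℂ))⁻¹)
      = ((1 - 4*z) ^ ((1:ℂ)/2) - 1 + 2*z) / (2*z^2) := by
  set s := (1 - 4 * z) ^ ((1 : ℂ) / 2)
  have hsz : s ^ 2 = 1 - 4 * z := cpow_one_half_sq _
  have hs : 0 < s.re := re_cpow_one_half_pos (by simpa using hz.ne')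
  have hz₀ : z ≠ 0 := fun h => by simp [h] at hz
  have hs₁ : s ≠ 1 := fun h => hz₀ (by rw [h] at hsz; linear_combination hsz / 4)
  have h1s : 1 + s ≠ 0 := fun h => by
    rw [show s = -1 by linear_combination h] at hs
    norm_num at hs
  rw [integral_Ioi_quarter_sqrt_div_mul_inv_sub hs hs₁ hsz]
  field_simp
  linear_combination (-2 * z - (1 + s)) * hsz
end

section
/- For 0 ≤ t₁ < t₂, x > t₁²/4 and real z not in [t₂²/4, ∞), the transition density f⁽¹'²⁾_{t₁,t₂}(x,y) = (t₂-t₁)√(4y - t₂²) / (2π[(y-x)² - (t₂-t₁)(t₁y - t₂x)]) on y > t₂²/4 satisfies ∫_{t₂²/4}^∞ f⁽¹'²⁾_{t₁,t₂}(x,y)/(z-y) dy = 1/(F(z) - x), where F(z) = (1/4)[t₁² - (t₂-t₁+√(t₂²-4z))²]. -/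
/-!
Put `d = t₂ - t₁`, `τ = √(4x - t₁²)`, `σ = √(t₂² - 4z)` and substitute `y = (s² + t₂²)/4`.
Then `(y - x)² - d (t₁ y - t₂ x) = ((s - τ)² + d²)((s + τ)² + d²)/16` and `z - y = -(s² + σ²)/4`,
so the integral becomes `-(16 d/π) ∫₀^∞ s² ds / (((s - τ)² + d²)((s + τ)² + d²)(s² + σ²))`.
By partial fractions this rational function has a primitive built from arctangents and a
logarithm, which vanishes at `0` and tends to `π / (4 d ((σ + d)² + τ²))` at infinity;
finally `F(z) - x = -((σ + d)² + τ²)/4`.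
-/

open Real Filter Topology MeasureTheory Set

theorem integral_Ioi_comp_sqrt_mul_deriv {g r : ℝ → ℝ} {L : ℝ} (c : ℝ)
    (hg : ∀ s, HasDerivAt g (r s) s) (hr : ∀ s, 0 < s → 0 ≤ r s)
    (hL : Tendsto g atTop (𝓝 L)) :
    ∫ y in Ioi (c / 4), r √(4 * y - c) * (2 / √(4 * y - c)) = L - g 0 := by
  set S : ℝ → ℝ := fun y => √(4 * y - c)
  have hS_pos : ∀ y ∈ Ioi (c / 4), 0 < 4 * y - c := fun y hy => by
    rw [mem_Ioi] at hy; linarith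
  have hS_deriv : ∀ y ∈ Ioi (c / 4), HasDerivAt S (2 / S y) y := by
    intro y hy
    have := (((hasDerivAt_id y).const_mul 4).sub_const c).sqrt (hS_pos y hy).ne'
    refine this.congr_deriv ?_
    simp only [S, id]
    ring
  have hS_atTop : Tendsto S atTop atTop :=
    tendsto_sqrt_atTop.comp
      (tendsto_atTop_add_const_right _ _ (tendsto_id.const_mul_atTop four_pos))
  have hg_cont : Continuous g := continuous_iff_continuousAt.2 fun s => (hg s).continuousAt
  have hS0 : S (c / 4) = 0 := by simp [S, mul_div_cancel₀]
  have := integral_Ioi_of_hasDerivAt_of_nonneg (hg_cont.comp (by fun_prop)).continuousWithinAt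
    (fun y hy => (hg (S y)).comp y (hS_deriv y hy))
    (fun y hy => mul_nonneg (hr _ (sqrt_pos.2 (hS_pos y hy))) (by positivity))
    (hL.comp hS_atTop)
  rwa [Function.comp_apply, hS0] at this

theorem hasDerivAt_arctan_add_div (a : ℝ) {b : ℝ} (hb : b ≠ 0) (s : ℝ) :
    HasDerivAt (fun s => arctan ((s + a) / b)) (b / ((s + a) ^ 2 + b ^ 2)) s := by
  refine (((hasDerivAt_id s).add_const a).div_const b).arctan.congr_deriv ?_
  simp only [id]
  field_simp
  ring

theorem hasDerivAt_log_sq_add_sq (a : ℝ) {b : ℝ} (hb : b ≠ 0) (s : ℝ) :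
    HasDerivAt (fun s => log ((s + a) ^ 2 + b ^ 2)) (2 * (s + a) / ((s + a) ^ 2 + b ^ 2)) s := by
  have h : (s + a) ^ 2 + b ^ 2 ≠ 0 := by positivity
  refine ((((hasDerivAt_id s).add_const a).pow 2).add_const _).log h |>.congr_deriv ?_
  simp

theorem tendsto_log_sub_log_sq_add_sq_atTop (τ d : ℝ) :
    Tendsto (fun s => log ((s - τ) ^ 2 + d ^ 2) - log ((s + τ) ^ 2 + d ^ 2)) atTop (𝓝 0) := by
  have hq : ContinuousAt
      (fun u : ℝ => ((1 - τ * u) ^ 2 + (d * u) ^ 2) / ((1 + τ * u) ^ 2 + (d * u) ^ 2)) 0 := by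
    fun_prop (disch := simp)
  have h := ((continuousAt_log (by simp)).comp hq).tendsto.comp tendsto_inv_atTop_zero
  simp only [Function.comp_def, mul_zero, sub_zero, add_zero, one_pow, ne_eq, OfNat.ofNat_ne_zero,
    not_false_eq_true, zero_pow, div_self, one_ne_zero, log_one] at h
  refine h.congr' ((eventually_gt_atTop |τ|).mono fun s hs => ?_)
  beta_reduce
  obtain ⟨hτs, hτs'⟩ := abs_lt.1 hs
  have hs₀ : s ≠ 0 := by linarith
  have hA : 0 < (s - τ) ^ 2 + d ^ 2 := by nlinarith [sq_nonneg d]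
  have hB : 0 < (s + τ) ^ 2 + d ^ 2 := by nlinarith [sq_nonneg d]
  rw [← log_div hA.ne' hB.ne']
  congr 1
  field_simp

namespace HalfStable

noncomputable def kernel (τ σ d s : ℝ) : ℝ :=
  s ^ 2 / (((s - τ) ^ 2 + d ^ 2) * ((s + τ) ^ 2 + d ^ 2) * (s ^ 2 + σ ^ 2))

/-- The denominator of `kernel` is `|s² - (τ + d i)²|² (s² + σ²)`; the coefficients come from its
partial-fraction decomposition, and the normalising factor is `|(σ i)² - (τ + d i)²|²`. -/
noncomputable def primitive (τ σ d s : ℝ) : ℝ :=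
  (-σ * arctan (s / σ)
    + (σ ^ 2 - τ ^ 2 - d ^ 2) / (8 * τ) * (log ((s - τ) ^ 2 + d ^ 2) - log ((s + τ) ^ 2 + d ^ 2))
    + (σ ^ 2 + τ ^ 2 + d ^ 2) / (4 * d) * (arctan ((s - τ) / d) + arctan ((s + τ) / d)))
  / (((σ - d) ^ 2 + τ ^ 2) * ((σ + d) ^ 2 + τ ^ 2))

variable {τ σ d : ℝ}

theorem hasDerivAt_primitive (hτ : τ ≠ 0) (hσ : σ ≠ 0) (hd : d ≠ 0) (s : ℝ) :
    HasDerivAt (primitive τ σ d) (kernel τ σ d s) s := by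
  have h₁ : HasDerivAt (fun s => arctan (s / σ)) (σ / (s ^ 2 + σ ^ 2)) s := by
    simpa using hasDerivAt_arctan_add_div 0 hσ s
  have h₂ := hasDerivAt_log_sq_add_sq (-τ) hd s
  have h₃ := hasDerivAt_log_sq_add_sq τ hd s
  have h₄ := hasDerivAt_arctan_add_div (-τ) hd s
  have h₅ := hasDerivAt_arctan_add_div τ hd s
  simp only [← sub_eq_add_neg] at h₂ h₄
  have h := (((h₁.const_mul (-σ)).add ((h₂.sub h₃).const_mul ((σ ^ 2 - τ ^ 2 - d ^ 2) / (8 * τ)))).add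
    ((h₄.add h₅).const_mul ((σ ^ 2 + τ ^ 2 + d ^ 2) / (4 * d)))).div_const
      (((σ - d) ^ 2 + τ ^ 2) * ((σ + d) ^ 2 + τ ^ 2))
  refine h.congr_deriv ?_
  have hA : (s - τ) ^ 2 + d ^ 2 ≠ 0 := by positivity
  have hB : (s + τ) ^ 2 + d ^ 2 ≠ 0 := by positivity
  have hC : s ^ 2 + σ ^ 2 ≠ 0 := by positivity
  have hK : ((σ - d) ^ 2 + τ ^ 2) * ((σ + d) ^ 2 + τ ^ 2) ≠ 0 := by positivity
  rw [kernel]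
  field_simp
  ring

theorem kernel_nonneg (s : ℝ) : 0 ≤ kernel τ σ d s := by
  unfold kernel
  positivity

theorem primitive_zero : primitive τ σ d 0 = 0 := by
  simp only [primitive, zero_sub, zero_add, zero_div, arctan_zero, neg_div, arctan_neg, neg_sq]
  ring

theorem tendsto_primitive_atTop (hτ : τ ≠ 0) (hσ : 0 < σ) (hd : 0 < d) :
    Tendsto (primitive τ σ d) atTop (𝓝 (π / (4 * d * ((σ + d) ^ 2 + τ ^ 2)))) := by
  have h_arctan : ∀ {a b : ℝ}, 0 < b → Tendsto (fun s => arctan ((s + a) / b)) atTop (𝓝 (π / 2)) :=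
    fun hb => (tendsto_arctan_atTop.mono_right nhdsWithin_le_nhds).comp
      ((tendsto_atTop_add_const_right _ _ tendsto_id).atTop_div_const hb)
  have h := ((((h_arctan (a := 0) hσ).const_mul (-σ)).add
      ((tendsto_log_sub_log_sq_add_sq_atTop τ d).const_mul ((σ ^ 2 - τ ^ 2 - d ^ 2) / (8 * τ)))).add
      (((h_arctan (a := -τ) hd).add (h_arctan (a := τ) hd)).const_mul
        ((σ ^ 2 + τ ^ 2 + d ^ 2) / (4 * d)))).div_const
      (((σ - d) ^ 2 + τ ^ 2) * ((σ + d) ^ 2 + τ ^ 2))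
  convert h using 2
  · simp [primitive, sub_eq_add_neg]
  · have : (σ - d) ^ 2 + τ ^ 2 ≠ 0 := by positivity
    field_simp
    ring

theorem density_div_sub_eq_kernel {t₁ t₂ x y z s τ σ : ℝ} (hd : t₂ - t₁ ≠ 0) (hs : 0 < s)
    (hy : 4 * y = s ^ 2 + t₂ ^ 2) (hx : 4 * x = τ ^ 2 + t₁ ^ 2) (hz : 4 * z = t₂ ^ 2 - σ ^ 2) :
    (t₂ - t₁) * s / (2 * π * ((y - x) ^ 2 - (t₂ - t₁) * (t₁ * y - t₂ * x))) / (z - y)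
      = -(16 * (t₂ - t₁) / π) * (kernel τ σ (t₂ - t₁) s * (2 / s)) := by
  obtain rfl : y = (s ^ 2 + t₂ ^ 2) / 4 := by linarith
  obtain rfl : x = (τ ^ 2 + t₁ ^ 2) / 4 := by linarith
  obtain rfl : z = (t₂ ^ 2 - σ ^ 2) / 4 := by linarith
  have hdenom : ((s ^ 2 + t₂ ^ 2) / 4 - (τ ^ 2 + t₁ ^ 2) / 4) ^ 2
      - (t₂ - t₁) * (t₁ * ((s ^ 2 + t₂ ^ 2) / 4) - t₂ * ((τ ^ 2 + t₁ ^ 2) / 4))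
      = ((s - τ) ^ 2 + (t₂ - t₁) ^ 2) * ((s + τ) ^ 2 + (t₂ - t₁) ^ 2) / 16 := by
    ring
  have hA : (s - τ) ^ 2 + (t₂ - t₁) ^ 2 ≠ 0 := by positivity
  have hB : (s + τ) ^ 2 + (t₂ - t₁) ^ 2 ≠ 0 := by positivity
  have hC : s ^ 2 + σ ^ 2 ≠ 0 := by positivity
  have hzy : (t₂ ^ 2 - σ ^ 2) / 4 - (s ^ 2 + t₂ ^ 2) / 4 = -(s ^ 2 + σ ^ 2) / 4 := by ring
  rw [hdenom, hzy, kernel]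
  field_simp
  ring

end HalfStable

theorem stmt14_general (t₁ t₂ : ℝ) (ht : t₁ < t₂) (x : ℝ)
    (hx : t₁^2/4 < x) (z : ℝ) (hz : z < t₂^2/4) :
    ∫ y in Set.Ioi (t₂^2/4),
        ((t₂-t₁) * Real.sqrt (4*y - t₂^2)
          / (2*Real.pi * ((y-x)^2 - (t₂-t₁)*(t₁*y - t₂*x)))) / (z - y)
      = 1 / ((1/4) * (t₁^2 - (t₂ - t₁ + Real.sqrt (t₂^2 - 4*z))^2) - x) := by
  have hd : 0 < t₂ - t₁ := sub_pos.2 ht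
  have hτ : 0 < √(4 * x - t₁ ^ 2) := sqrt_pos.2 (by linarith)
  have hσ : 0 < √(t₂ ^ 2 - 4 * z) := sqrt_pos.2 (by linarith)
  have hτsq := sq_sqrt (by linarith : 0 ≤ 4 * x - t₁ ^ 2)
  have hσsq := sq_sqrt (by linarith : 0 ≤ t₂ ^ 2 - 4 * z)
  set d := t₂ - t₁
  set τ := √(4 * x - t₁ ^ 2)
  set σ := √(t₂ ^ 2 - 4 * z)
  calc _ = ∫ y in Ioi (t₂ ^ 2 / 4),
        -(16 * d / π) * (HalfStable.kernel τ σ d √(4 * y - t₂ ^ 2) * (2 / √(4 * y - t₂ ^ 2))) := by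
        refine setIntegral_congr_fun measurableSet_Ioi fun y hy => ?_
        have hy : 0 < 4 * y - t₂ ^ 2 := by rw [mem_Ioi] at hy; linarith
        exact HalfStable.density_div_sub_eq_kernel hd.ne' (sqrt_pos.2 hy)
          (by rw [sq_sqrt hy.le]; ring) (by linarith) (by linarith)
    _ = -(16 * d / π) * (π / (4 * d * ((σ + d) ^ 2 + τ ^ 2)) - HalfStable.primitive τ σ d 0) := by
        rw [integral_const_mul, integral_Ioi_comp_sqrt_mul_deriv _
          (HalfStable.hasDerivAt_primitive hτ.ne' hσ.ne' hd.ne')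
          (fun s _ => HalfStable.kernel_nonneg s)
          (HalfStable.tendsto_primitive_atTop hτ.ne' hσ hd)]
    _ = _ := by
        have : (1 / 4) * (t₁ ^ 2 - (d + σ) ^ 2) - x = -((σ + d) ^ 2 + τ ^ 2) / 4 := by
          linear_combination (1 / 4 : ℝ) * hτsq
        rw [HalfStable.primitive_zero, this]
        field_simp
        ring

theorem stmt14 (t₁ t₂ : ℝ) (ht₁ : 0 ≤ t₁) (ht : t₁ < t₂) (x : ℝ)
    (hx : t₁^2/4 < x) (z : ℝ) (hz : z < t₂^2/4) :
    ∫ y in Set.Ioi (t₂^2/4),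
        ((t₂-t₁) * Real.sqrt (4*y - t₂^2)
          / (2*Real.pi * ((y-x)^2 - (t₂-t₁)*(t₁*y - t₂*x)))) / (z - y)
      = 1 / ((1/4) * (t₁^2 - (t₂ - t₁ + Real.sqrt (t₂^2 - 4*z))^2) - x) :=
  stmt14_general t₁ t₂ ht x hx z hz
end

section
/- Let {W_t} be a stochastic process with E[(W_t - W_s)⁴] = (2+q)(t-s)² + 2(1-q)s(t-s) for all 0 ≤ s < t, where q ∈ (-1,1). Then for any 0 ≤ S < T, a > 0, and any partition S = t₀ < t₁ < ... < t_n = T into n equal intervals, P(max_{1≤i≤n} |W_{t_i} - W_{t_{i-1}}| > a) ≤ (1/a⁴)[(2+q)(T-S)²/n + (1-q)(T² - S²)], and consequently the limsup as n → ∞ of the left side is at most (1-q)(T²-S²)/a⁴. -/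
/-! Each increment over a cell of the uniform grid is controlled by Markov's inequality for its
fourth moment, and a union bound over the cells sums these moments. Of the two terms of the
moment formula, `(2+q)(t-s)²` sums to `(2+q)(T-S)²/n`, which vanishes as `n → ∞`, while
`2(1-q)s(t-s)` sums to `(1-q)` times twice the left Riemann sum of `∫_S^T t dt`, which is
`(1-q)((T²-S²) - (T-S)²/n) ≤ (1-q)(T²-S²)`. -/

open MeasureTheory Filter Finset

section Markov

variable {Ω : Type*} [MeasurableSpace Ω] {μ : Measure Ω} [IsFiniteMeasure μ] {p : ℕ} {a : ℝ}

lemma measure_lt_abs_le_integral_pow_div {X : Ω → ℝ} (hp : Even p)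
    (hX : Integrable (fun ω => X ω ^ p) μ) (ha : 0 < a) :
    μ {ω | a < |X ω|} ≤ ENNReal.ofReal ((∫ ω, X ω ^ p ∂μ) / a ^ p) := by
  have hsub : {ω | a < |X ω|} ⊆ {ω | a ^ p ≤ X ω ^ p} := fun ω (h : a < |X ω|) => by
    simpa only [Set.mem_ofPred_eq, hp.pow_abs] using pow_le_pow_left₀ ha.le h.le p
  calc μ {ω | a < |X ω|} ≤ μ {ω | a ^ p ≤ X ω ^ p} := measure_mono hsub
    _ = ENNReal.ofReal (μ.real {ω | a ^ p ≤ X ω ^ p}) := (ofReal_measureReal (by finiteness)).symm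
    _ ≤ ENNReal.ofReal ((∫ ω, X ω ^ p ∂μ) / a ^ p) := by
      refine ENNReal.ofReal_le_ofReal ((le_div_iff₀' (by positivity)).2 ?_)
      exact mul_meas_ge_le_integral_of_nonneg (ae_of_all _ fun ω => hp.pow_nonneg _) hX _

lemma measure_exists_lt_abs_le_sum_integral_pow_div {ι : Type*} (I : Finset ι)
    {X : ι → Ω → ℝ} (hp : Even p) (hX : ∀ i ∈ I, Integrable (fun ω => X i ω ^ p) μ)
    (ha : 0 < a) :
    μ {ω | ∃ i ∈ I, a < |X i ω|} ≤ ENNReal.ofReal ((∑ i ∈ I, ∫ ω, X i ω ^ p ∂μ) / a ^ p) := by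
  have hset : {ω | ∃ i ∈ I, a < |X i ω|} = ⋃ i ∈ I, {ω | a < |X i ω|} := by
    ext ω; simp
  have hnonneg : ∀ i ∈ I, 0 ≤ (∫ ω, X i ω ^ p ∂μ) / a ^ p := fun i _ =>
    div_nonneg (integral_nonneg fun ω => hp.pow_nonneg _) (by positivity)
  calc μ {ω | ∃ i ∈ I, a < |X i ω|} ≤ ∑ i ∈ I, μ {ω | a < |X i ω|} :=
        hset ▸ measure_biUnion_finset_le _ _
    _ ≤ ∑ i ∈ I, ENNReal.ofReal ((∫ ω, X i ω ^ p ∂μ) / a ^ p) :=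
        sum_le_sum fun i hi => measure_lt_abs_le_integral_pow_div hp (hX i hi) ha
    _ = ENNReal.ofReal ((∑ i ∈ I, ∫ ω, X i ω ^ p ∂μ) / a ^ p) := by
        rw [← ENNReal.ofReal_sum_of_nonneg hnonneg, sum_div]

end Markov

lemma sum_Icc_natCast_sub_one (n : ℕ) :
    ∑ i ∈ Icc 1 n, ((i : ℝ) - 1) = n * ((n : ℝ) - 1) / 2 := by
  induction n with
  | zero => simp
  | succ m ih =>
    rw [sum_Icc_succ_top (by omega), ih]
    push_cast
    ring

section UniformGrid

variable {S T : ℝ} {n : ℕ}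

lemma uniform_grid_sub_prev (hn : 0 < n) (i : ℝ) :
    (S + i * (T - S) / n) - (S + (i - 1) * (T - S) / n) = (T - S) / n := by
  field_simp
  ring

lemma uniform_grid_prev_nonneg (hS : 0 ≤ S) (hST : S < T) {i : ℕ} (hi : i ∈ Icc 1 n) :
    0 ≤ S + ((i : ℝ) - 1) * (T - S) / n := by
  have : (1 : ℝ) ≤ i := by exact_mod_cast (mem_Icc.1 hi).1
  have := sub_pos.2 hST
  positivity

lemma uniform_grid_prev_lt (hST : S < T) (hn : 0 < n) (i : ℝ) :
    S + (i - 1) * (T - S) / n < S + i * (T - S) / n := by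
  have := uniform_grid_sub_prev (S := S) (T := T) hn i
  have : 0 < (T - S) / n := div_pos (sub_pos.2 hST) (by exact_mod_cast hn)
  linarith

lemma sum_uniform_grid_prev_mul_step (hn : 0 < n) :
    ∑ i ∈ Icc 1 n, (S + ((i : ℝ) - 1) * (T - S) / n) * ((T - S) / n)
      = ((T ^ 2 - S ^ 2) - (T - S) ^ 2 / n) / 2 := by
  have hterm : ∀ i ∈ Icc 1 n, (S + ((i : ℝ) - 1) * (T - S) / n) * ((T - S) / n)
      = S * ((T - S) / n) + ((T - S) / n) ^ 2 * ((i : ℝ) - 1) := fun i _ => by ring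
  rw [sum_congr rfl hterm, sum_add_distrib, sum_const, ← mul_sum, sum_Icc_natCast_sub_one,
    Nat.card_Icc, Nat.add_sub_cancel, nsmul_eq_mul]
  field_simp
  ring

end UniformGrid

lemma sum_integral_increment_pow_four_uniform_grid {Ω : Type*} [MeasurableSpace Ω]
    {μ : Measure Ω} {W : ℝ → Ω → ℝ} {q S T : ℝ}
    (hmom : ∀ s t : ℝ, 0 ≤ s → s < t →
      ∫ ω, (W t ω - W s ω)^4 ∂μ = (2+q)*(t-s)^2 + 2*(1-q)*s*(t-s))
    (hS : 0 ≤ S) (hST : S < T) {n : ℕ} (hn : 0 < n) :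
    ∑ i ∈ Icc 1 n, ∫ ω, (W (S + i*(T-S)/n) ω - W (S + ((i:ℝ)-1)*(T-S)/n) ω)^4 ∂μ
      = (2+q)*(T-S)^2/n + (1-q)*((T^2-S^2) - (T-S)^2/n) := by
  rw [sum_congr rfl fun i hi => by
    rw [hmom _ _ (uniform_grid_prev_nonneg hS hST hi) (uniform_grid_prev_lt hST hn _),
      uniform_grid_sub_prev hn]]
  rw [sum_add_distrib, sum_const, Nat.card_Icc, Nat.add_sub_cancel, nsmul_eq_mul]
  simp_rw [mul_assoc (2 * (1 - q)), ← mul_sum, sum_uniform_grid_prev_mul_step hn]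
  field_simp

lemma limsup_le_ofReal_of_le_div_add {u : ℕ → ENNReal} {c d : ℝ}
    (h : ∀ n : ℕ, 0 < n → u n ≤ ENNReal.ofReal (c / n + d)) :
    limsup u atTop ≤ ENNReal.ofReal d := by
  have hlim : Tendsto (fun n : ℕ => ENNReal.ofReal (c / n + d)) atTop (nhds (ENNReal.ofReal d)) :=
    ENNReal.tendsto_ofReal (by simpa using (tendsto_const_div_atTop_nhds_zero_nat c).add_const d)
  calc limsup u atTop ≤ limsup (fun n : ℕ => ENNReal.ofReal (c / n + d)) atTop :=
        limsup_le_limsup ((eventually_gt_atTop 0).mono h)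
    _ = ENNReal.ofReal d := hlim.limsup_eq

theorem stmt18 {Ω : Type*} [MeasurableSpace Ω] (μ : Measure Ω) [IsProbabilityMeasure μ]
    (W : ℝ → Ω → ℝ) (q : ℝ) (hq : q ∈ Set.Ioo (-1:ℝ) 1)
    (hint : ∀ s t : ℝ, 0 ≤ s → s < t → Integrable (fun ω => (W t ω - W s ω)^4) μ)
    (hmom : ∀ s t : ℝ, 0 ≤ s → s < t →
      ∫ ω, (W t ω - W s ω)^4 ∂μ = (2+q)*(t-s)^2 + 2*(1-q)*s*(t-s))
    (S T a : ℝ) (hS : 0 ≤ S) (hST : S < T) (ha : 0 < a) :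
    (∀ n : ℕ, 0 < n →
      μ {ω | ∃ i ∈ Finset.Icc 1 n,
          a < |W (S + i*(T-S)/n) ω - W (S + ((i:ℝ)-1)*(T-S)/n) ω|}
        ≤ ENNReal.ofReal ((1/a^4) * ((2+q)*(T-S)^2/n + (1-q)*(T^2-S^2)))) ∧
    Filter.limsup (fun n : ℕ =>
        μ {ω | ∃ i ∈ Finset.Icc 1 n,
            a < |W (S + i*(T-S)/n) ω - W (S + ((i:ℝ)-1)*(T-S)/n) ω|})
      Filter.atTop ≤ ENNReal.ofReal ((1-q)*(T^2-S^2)/a^4) := by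
  have bound : ∀ n : ℕ, 0 < n →
      μ {ω | ∃ i ∈ Finset.Icc 1 n,
          a < |W (S + i*(T-S)/n) ω - W (S + ((i:ℝ)-1)*(T-S)/n) ω|}
        ≤ ENNReal.ofReal ((1/a^4) * ((2+q)*(T-S)^2/n + (1-q)*(T^2-S^2))) := by
    intro n hn
    refine (measure_exists_lt_abs_le_sum_integral_pow_div _ (by decide)
      (fun i hi => hint _ _ (uniform_grid_prev_nonneg hS hST hi) (uniform_grid_prev_lt hST hn _))
      ha).trans (ENNReal.ofReal_le_ofReal ?_)
    rw [sum_integral_increment_pow_four_uniform_grid hmom hS hST hn, one_div_mul_eq_div]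
    refine div_le_div_of_nonneg_right ?_ (by positivity)
    have : 0 ≤ (1 - q) * ((T - S) ^ 2 / n) := mul_nonneg (by linarith [hq.2]) (by positivity)
    linarith
  refine ⟨bound, limsup_le_ofReal_of_le_div_add (c := (2+q)*(T-S)^2/a^4) fun n hn => ?_⟩
  exact (bound n hn).trans_eq (congrArg ENNReal.ofReal (by ring))
end
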